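/- Let h be a real number, let v = (x_v, h+1), q_l = (x_l, h), q = (x_q, h), q_r = (x_r, h) be points of ℝ² with x_l < x_q < x_r, and let p be a point of ℝ² with second coordinate at least h+1. Then the closed segment from q to p intersects the union of the closed segment from v to q_l and the closed segment from v to q_r. -/

import Mathlib

/-! The segment from `q` to `p` passes through a point `w` at height `h + 1`. If `w` is on or
left of the apex `v`, then `[q, w]` and the left edge `[q_l, v]` both run from height `h` to
height `h + 1`, starting with `[q, w]` to the right of the edge and ending with it not to the
right; comparing the two at equal heights, they cross. Symmetrically on the right. -/

section

variable {𝕜 E F : Type*} [Field 𝕜] [LinearOrder 𝕜] [IsStrictOrderedRing 𝕜]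
  [AddCommGroup E] [Module 𝕜 E] [AddCommGroup F] [Module 𝕜 F]

theorem Prod.exists_mem_segment_snd_eq {a b : E × 𝕜} {c : 𝕜} (hac : a.2 ≤ c) (hcb : c ≤ b.2) :
    ∃ w ∈ segment 𝕜 a b, w.2 = c := by
  have hc : c ∈ (LinearMap.snd 𝕜 E 𝕜).toAffineMap '' segment 𝕜 a b := by
    rw [image_segment, LinearMap.coe_toAffineMap, LinearMap.snd_apply, LinearMap.snd_apply,
      segment_eq_Icc (hac.trans hcb)]
    exact ⟨hac, hcb⟩
  obtain ⟨w, hw, rfl⟩ := hc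
  exact ⟨w, hw, rfl⟩

theorem Prod.segment_inter_nonempty_of_fst_cross {a b c d : 𝕜 × F}
    (hsnd₀ : a.2 = c.2) (hsnd₁ : b.2 = d.2) (hfst₀ : c.1 ≤ a.1) (hfst₁ : b.1 ≤ d.1) :
    (segment 𝕜 a b ∩ segment 𝕜 c d).Nonempty := by
  have hzero : (0 : 𝕜) ∈ segment 𝕜 (a.1 - c.1) (b.1 - d.1) := by
    rw [segment_symm, segment_eq_Icc (by linarith)]
    constructor <;> linarith
  obtain ⟨s, t, hs, ht, hst, hcross⟩ := hzero
  -- with the same weights both combinations lie at the same height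
  refine ⟨s • a + t • b, ⟨s, t, hs, ht, hst, rfl⟩, s, t, hs, ht, hst, ?_⟩
  ext
  · simp only [smul_eq_mul] at hcross
    simp only [Prod.fst_add, Prod.smul_fst, smul_eq_mul]
    linear_combination -hcross
  · simp only [Prod.snd_add, Prod.smul_snd, hsnd₀, hsnd₁]

end

/-- the tent obstruction: if `v = (x_v, h+1)` and
`q_l = (x_l, h)`, `q = (x_q, h)`, `q_r = (x_r, h)` with `x_l < x_q < x_r`, then
for any point `p` of second coordinate at least `h + 1`, the closed segment
from `q` to `p` meets the union of the closed segments from `v` to `q_l` and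
from `v` to `q_r`. -/
theorem tent_obstruction (h xv xl xq xr : ℝ) (hlq : xl < xq) (hqr : xq < xr)
    (p : ℝ × ℝ) (hp : h + 1 ≤ p.2) :
    (segment ℝ ((xq, h) : ℝ × ℝ) p ∩
      (segment ℝ ((xv, h + 1) : ℝ × ℝ) ((xl, h) : ℝ × ℝ) ∪
       segment ℝ ((xv, h + 1) : ℝ × ℝ) ((xr, h) : ℝ × ℝ))).Nonempty := by
  obtain ⟨w, hw, hw₂⟩ := Prod.exists_mem_segment_snd_eq (a := ((xq, h) : ℝ × ℝ)) (b := p)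
    (by simp) hp
  have hsub : segment ℝ ((xq, h) : ℝ × ℝ) w ⊆ segment ℝ ((xq, h) : ℝ × ℝ) p :=
    (convex_segment _ _).segment_subset (left_mem_segment _ _ _) hw
  rcases le_total w.1 xv with hwv | hvw
  · obtain ⟨z, hzw, hzl⟩ := Prod.segment_inter_nonempty_of_fst_cross
      (a := ((xq, h) : ℝ × ℝ)) (c := ((xl, h) : ℝ × ℝ)) (d := ((xv, h + 1) : ℝ × ℝ))
      rfl hw₂ hlq.le hwv
    exact ⟨z, hsub hzw, Or.inl ((segment_symm ℝ _ _).subset hzl)⟩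
  · obtain ⟨z, hzr, hzw⟩ := Prod.segment_inter_nonempty_of_fst_cross
      (a := ((xr, h) : ℝ × ℝ)) (b := ((xv, h + 1) : ℝ × ℝ)) (c := ((xq, h) : ℝ × ℝ))
      rfl hw₂.symm hqr.le hvw
    exact ⟨z, hsub hzw, Or.inr ((segment_symm ℝ _ _).subset hzr)⟩
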